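/- arXiv:2010.14065 — 3 statements merged into one kernel-verified Lean document; each statement's English description precedes it below -/
import Mathlib

section
/- There exists a constant C ≥ 1, depending only on m and n, such that for every integer k ≥ 2, every real t ≥ 2, every unimodular lattice x = g·ℤ^d with g ∈ SL_d(ℝ), every M > 0, and all tuples (s_1,…,s_k) and (s'_1,…,s'_k) of elements of B(1) satisfying Σ_{j=1}^{k} e^{−(m+n)(j−1)t}·s_j = Σ_{j=1}^{k} e^{−(m+n)(j−1)t}·s'_j: if α̃^t( g_t·h_{s'_{k−1}}·g_t·h_{s'_{k−2}}·⋯·g_t·h_{s'_1}·x ) > M, then α̃^t( g_t·h_{s_{k−1}}·g_t·h_{s_{k−2}}·⋯·g_t·h_{s_1}·x ) > M/C. -/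
/-!
Conjugating `h_s` past `g_u` rescales `s` by `e^{-(m+n)u}`, so the word
`g_t h_{s_l} ⋯ g_t h_{s_1}` equals `g_{lt} h_σ` with `σ = Σ_{j ≤ l} e^{-(m+n)(j-1)t} s_j`.
Equal weighted sums up to `k` therefore make the two words of length `k - 1` differ by left
multiplication with `h_x`, `x = s'_k - s_k`, whose operator norm, like that of its inverse
`h_{-x}`, is at most `√(m + n + 4)`. A linear map of norm `L` multiplies a Gram determinant of
`i` vectors by at most `L^{2i}` (Loewner monotonicity of the determinant), so it changes each
`α_i`, and hence `α̃^t`, by a factor at most `L^{m+n}`.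
-/

open scoped BigOperators
open MeasureTheory ProbabilityTheory

noncomputable section

namespace DiagFlows

/-- The index type for `ℝ^{m+n}`, split into the first `m` and the last `n` coordinates. -/
abbrev Idx (m n : ℕ) := Fin m ⊕ Fin n

/-- The space of `m × n` real matrices equipped with the Euclidean (Frobenius) norm. -/
abbrev Mspace (m n : ℕ) := EuclideanSpace ℝ (Fin m × Fin n)

/-- Interpret a point of `Mspace m n` as an `m × n` matrix. -/
def toMat {m n : ℕ} (s : Mspace m n) : Matrix (Fin m) (Fin n) ℝ :=
  Matrix.of fun i j => s (i, j)

/-- The diagonal matrix `g_t = diag(e^{nt},…,e^{nt},e^{-mt},…,e^{-mt})`. -/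
def gt (m n : ℕ) (t : ℝ) : Matrix (Idx m n) (Idx m n) ℝ :=
  Matrix.diagonal (Sum.elim (fun _ => Real.exp (n * t)) (fun _ => Real.exp (-(m * t))))

/-- The block matrix `h_s = [[1, s], [0, 1]]`. -/
def hMat {m n : ℕ} (s : Matrix (Fin m) (Fin n) ℝ) : Matrix (Idx m n) (Idx m n) ℝ :=
  Matrix.fromBlocks 1 s 0 1

/-- `w` is a vector of the lattice `g·ℤ^{m+n}`. -/
def IsLatticeVec {m n : ℕ} (g : Matrix (Idx m n) (Idx m n) ℝ) (w : Idx m n → ℝ) : Prop :=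
  ∃ v : Idx m n → ℤ, w = g.mulVec fun j => (v j : ℝ)

/-- The Gram matrix of a tuple of vectors: the matrix of Euclidean inner products. -/
def gram {ι : Type*} [Fintype ι] {i : ℕ} (w : Fin i → ι → ℝ) : Matrix (Fin i) (Fin i) ℝ :=
  Matrix.of fun a b => ∑ j, w a j * w b j

/-- The height function `α_i` of the lattice `x = g·ℤ^{m+n}`: the supremum of
`det(Gram(w₁,…,w_i))^{-1/2}` over all linearly independent `i`-tuples of vectors of the
lattice, with the conventions `α_0(x) = 1` and `α_{m+n}(x) = 1`. -/
def alpha (m n : ℕ) (g : Matrix (Idx m n) (Idx m n) ℝ) (i : ℕ) : ℝ :=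
  if i = 0 ∨ i = m + n then 1
  else sSup {r : ℝ | ∃ w : Fin i → Idx m n → ℝ,
    (∀ a, IsLatticeVec g (w a)) ∧ LinearIndependent ℝ w ∧
    r = (gram w).det ^ (-(1 / 2) : ℝ)}

/-- The combined height function
`α̃^t(x) = Σ_{i=0}^{m+n} (m+n-1)^{-i(m+n-i)} e^{-(mn+1/2)i(m+n-i)t} α_i(x)^{1/2}`. -/
def alphaT (m n : ℕ) (t : ℝ) (g : Matrix (Idx m n) (Idx m n) ℝ) : ℝ :=
  ∑ i ∈ Finset.range (m + n + 1),
    (((m + n : ℝ) - 1) ^ (i * (m + n - i)))⁻¹ *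
      Real.exp (-((m * n : ℝ) + 1 / 2) * ((i * (m + n - i) : ℕ) : ℝ) * t) *
      Real.sqrt (alpha m n g i)

/-- The product `g_t·h_{s_l}·g_t·h_{s_{l−1}}·⋯·g_t·h_{s_1}` (and `1` for `l = 0`). -/
def word (m n : ℕ) (t : ℝ) (s : ℕ → Mspace m n) : ℕ → Matrix (Idx m n) (Idx m n) ℝ
  | 0 => 1
  | l + 1 => gt m n t * hMat (toMat (s (l + 1))) * word m n t s l

end DiagFlows

open Matrix WithLp Finset
open scoped MatrixOrder

theorem Matrix.PosSemidef.one_le_det_one_add {ι : Type*} [Fintype ι] [DecidableEq ι]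
    {M : Matrix ι ι ℝ} (hM : M.PosSemidef) : 1 ≤ (1 + M).det := by
  have h : 1 + M = cfc (fun x : ℝ => 1 + x) M := by
    rw [cfc_add .., cfc_const_one .., cfc_id' ..]
  rw [h, hM.isHermitian.cfc_eq]
  simp [IsHermitian.cfc, -Unitary.conjStarAlgAut_apply]
  exact one_le_prod fun j _ => by linarith [hM.eigenvalues_nonneg j]

theorem Matrix.PosDef.det_le_det_of_le {ι : Type*} [Fintype ι] [DecidableEq ι]
    {A B : Matrix ι ι ℝ} (hA : A.PosDef) (hAB : A ≤ B) : A.det ≤ B.det := by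
  set S := CFC.sqrt A
  have hSS : S * S = A := CFC.sqrt_mul_sqrt_self A hA.posSemidef.nonneg
  have hS : IsUnit S.det := by
    rw [isUnit_iff_ne_zero]
    intro h0
    simpa [← hSS, h0] using hA.det_pos.ne'
  have hA_conj : S⁻¹ * A * S⁻¹ = 1 := by
    rw [← hSS, ← mul_assoc, nonsing_inv_mul _ hS, one_mul, mul_nonsing_inv _ hS]
  have hB_conj : 1 ≤ (S⁻¹ * B * S⁻¹).det := by
    have := IsSelfAdjoint.conjugate_le_conjugate hAB (CFC.sqrt_nonneg A).posSemidef.inv.isHermitian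
    rw [hA_conj, le_iff] at this
    simpa using this.one_le_det_one_add
  have hdet := congrArg det hA_conj
  simp only [det_mul, det_one] at hdet hB_conj
  nlinarith [hA.det_pos]

theorem Matrix.norm_toEuclideanCLM_le_sqrt_sum_sq {ι : Type*} [Fintype ι] [DecidableEq ι]
    (A : Matrix ι ι ℝ) : ‖toEuclideanCLM (𝕜 := ℝ) A‖ ≤ √(∑ p, ∑ q, A p q ^ 2) := by
  refine ContinuousLinearMap.opNorm_le_bound _ (Real.sqrt_nonneg _) fun v => ?_
  have hsq : ‖toEuclideanCLM (𝕜 := ℝ) A v‖ ^ 2 ≤ (∑ p, ∑ q, A p q ^ 2) * ‖v‖ ^ 2 := by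
    rw [EuclideanSpace.norm_sq_eq, EuclideanSpace.norm_sq_eq, sum_mul]
    refine sum_le_sum fun p _ => ?_
    simp only [Real.norm_eq_abs, sq_abs, ofLp_toEuclideanCLM]
    exact sum_mul_sq_le_sq_mul_sq univ (A p) v
  rw [← Real.sqrt_sq (norm_nonneg v), ← Real.sqrt_mul (by positivity),
    Real.le_sqrt (norm_nonneg _) (by positivity)]
  exact hsq

/-- The reverse domination `hTS` is needed only because `sSup` of a set unbounded above is `0`. -/
theorem Real.sSup_le_mul_sSup_of_forall_exists_le {S T : Set ℝ} {c : ℝ} (hc : 0 ≤ c)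
    (hT : ∀ y ∈ T, 0 ≤ y) (hST : ∀ x ∈ S, ∃ y ∈ T, x ≤ c * y)
    (hTS : ∀ y ∈ T, ∃ x ∈ S, y ≤ c * x) : sSup S ≤ c * sSup T := by
  by_cases hT_bdd : BddAbove T
  · refine Real.sSup_le (fun x hx => ?_) (mul_nonneg hc (Real.sSup_nonneg hT))
    obtain ⟨y, hy, hxy⟩ := hST x hx
    exact hxy.trans (mul_le_mul_of_nonneg_left (le_csSup hT_bdd hy) hc)
  · have hS_bdd : ¬BddAbove S := by
      rintro ⟨B, hB⟩
      refine hT_bdd ⟨c * B, fun y hy => ?_⟩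
      obtain ⟨x, hx, hyx⟩ := hTS y hy
      exact hyx.trans (mul_le_mul_of_nonneg_left (hB hx) hc)
    simp [Real.sSup_of_not_bddAbove hT_bdd, Real.sSup_of_not_bddAbove hS_bdd]

theorem Real.rpow_neg_half_le_mul_rpow_neg_half {a b c : ℝ} (ha : 0 < a) (hb : 0 < b)
    (hc : 0 ≤ c) (hba : b ≤ c ^ 2 * a) : a ^ (-(1 / 2) : ℝ) ≤ c * b ^ (-(1 / 2) : ℝ) := by
  rw [Real.rpow_neg ha.le, Real.rpow_neg hb.le, ← Real.sqrt_eq_rpow, ← Real.sqrt_eq_rpow,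
    ← div_eq_mul_inv, inv_eq_one_div, div_le_div_iff₀ (Real.sqrt_pos.2 ha) (Real.sqrt_pos.2 hb),
    one_mul]
  calc √b ≤ √(c ^ 2 * a) := Real.sqrt_le_sqrt hba
    _ = c * √a := by rw [Real.sqrt_mul (sq_nonneg c), Real.sqrt_sq hc]

namespace DiagFlows

section Gram

variable {ι : Type*} [Fintype ι] {i : ℕ}

lemma gram_eq_gram_toLp (w : Fin i → ι → ℝ) :
    gram w = Matrix.gram ℝ (fun a => toLp 2 (w a)) := by
  ext a b
  simp [gram, Matrix.gram_apply, PiLp.inner_apply, mul_comm]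

lemma posDef_gram {w : Fin i → ι → ℝ} (hw : LinearIndependent ℝ w) : (gram w).PosDef := by
  rw [gram_eq_gram_toLp]
  exact posDef_gram_of_linearIndependent
    (hw.map' (WithLp.linearEquiv 2 ℝ (ι → ℝ)).symm.toLinearMap (LinearEquiv.ker _))

lemma det_gram_mulVec_le [DecidableEq ι] (h : Matrix ι ι ℝ) {w : Fin i → ι → ℝ}
    (hw : LinearIndependent ℝ fun a => h *ᵥ w a) :
    (gram fun a => h *ᵥ w a).det ≤ ‖toEuclideanCLM (𝕜 := ℝ) h‖ ^ (2 * i) * (gram w).det := by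
  have hle : (gram fun a => h *ᵥ w a) ≤ ‖toEuclideanCLM (𝕜 := ℝ) h‖ ^ 2 • gram w := by
    rw [le_iff, gram_eq_gram_toLp, gram_eq_gram_toLp]
    convert posSemidef_opNorm_smul_gram_sub_gram _ (toEuclideanCLM (𝕜 := ℝ) h) using 3
    ext1 a
    simp [toEuclideanCLM_toLp]
  calc _ ≤ (‖toEuclideanCLM (𝕜 := ℝ) h‖ ^ 2 • gram w).det := (posDef_gram hw).det_le_det_of_le hle
    _ = _ := by rw [det_smul, Fintype.card_fin, pow_mul]

end Gram

section Alpha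

variable {m n : ℕ}

def alphaSet (m n : ℕ) (g : Matrix (Idx m n) (Idx m n) ℝ) (i : ℕ) : Set ℝ :=
  {r : ℝ | ∃ w : Fin i → Idx m n → ℝ,
    (∀ a, IsLatticeVec g (w a)) ∧ LinearIndependent ℝ w ∧ r = (gram w).det ^ (-(1 / 2) : ℝ)}

lemma alpha_eq_sSup_alphaSet {g : Matrix (Idx m n) (Idx m n) ℝ} {i : ℕ}
    (hi : ¬(i = 0 ∨ i = m + n)) : alpha m n g i = sSup (alphaSet m n g i) :=
  if_neg hi

lemma nonneg_of_mem_alphaSet {g : Matrix (Idx m n) (Idx m n) ℝ} {i : ℕ} {r : ℝ}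
    (hr : r ∈ alphaSet m n g i) : 0 ≤ r := by
  obtain ⟨w, -, hw, rfl⟩ := hr
  exact Real.rpow_nonneg (posDef_gram hw).det_pos.le _

lemma exists_mem_alphaSet_le_mul {h h' g : Matrix (Idx m n) (Idx m n) ℝ} (hh : h' * h = 1)
    {L : ℝ} (hL1 : 1 ≤ L) (hL : ‖toEuclideanCLM (𝕜 := ℝ) h‖ ≤ L) {i : ℕ} {r : ℝ}
    (hr : r ∈ alphaSet m n g i) : ∃ r' ∈ alphaSet m n (h * g) i, r ≤ L ^ (m + n) * r' := by
  obtain ⟨w, hlat, hw, rfl⟩ := hr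
  have hw' : LinearIndependent ℝ fun a => h *ᵥ w a :=
    hw.map' h.mulVecLin
      (LinearMap.ker_eq_bot_of_inverse (by rw [← mulVecLin_mul, hh, mulVecLin_one]))
  have hi : i ≤ m + n := by simpa using hw.fintype_card_le_finrank
  refine ⟨_, ⟨fun a => h *ᵥ w a, fun a => ?_, hw', rfl⟩,
    Real.rpow_neg_half_le_mul_rpow_neg_half (posDef_gram hw).det_pos (posDef_gram hw').det_pos
      (by positivity) ?_⟩
  · obtain ⟨v, hv⟩ := hlat a
    exact ⟨v, by rw [← mulVec_mulVec, ← hv]⟩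
  · calc _ ≤ ‖toEuclideanCLM (𝕜 := ℝ) h‖ ^ (2 * i) * (gram w).det := det_gram_mulVec_le h hw'
      _ ≤ (L ^ (m + n)) ^ 2 * (gram w).det := by
        refine mul_le_mul_of_nonneg_right ?_ (posDef_gram hw).det_pos.le
        rw [← pow_mul, mul_comm (m + n)]
        exact (pow_le_pow_left₀ (norm_nonneg _) hL _).trans (pow_le_pow_right₀ hL1 (by omega))

lemma alpha_le_mul_alpha {h h' : Matrix (Idx m n) (Idx m n) ℝ} (hh : h' * h = 1)
    (hh' : h * h' = 1) {L : ℝ} (hL1 : 1 ≤ L) (hL : ‖toEuclideanCLM (𝕜 := ℝ) h‖ ≤ L)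
    (hL' : ‖toEuclideanCLM (𝕜 := ℝ) h'‖ ≤ L) (g : Matrix (Idx m n) (Idx m n) ℝ) (i : ℕ) :
    alpha m n g i ≤ L ^ (m + n) * alpha m n (h * g) i := by
  by_cases hi : i = 0 ∨ i = m + n
  · simpa [alpha, hi] using one_le_pow₀ hL1
  rw [alpha_eq_sSup_alphaSet hi, alpha_eq_sSup_alphaSet hi]
  refine Real.sSup_le_mul_sSup_of_forall_exists_le (by positivity)
    (fun _ => nonneg_of_mem_alphaSet) (fun _ => exists_mem_alphaSet_le_mul hh hL1 hL)
    fun r hr => ?_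
  simpa [← mul_assoc, hh] using exists_mem_alphaSet_le_mul hh' hL1 hL' hr

/-- For `m + n = 0` the base `-1` is harmless: the truncated exponent `i * (0 - i)` is `0`. -/
lemma alphaT_coeff_nonneg (m n i : ℕ) (t : ℝ) :
    0 ≤ (((m + n : ℝ) - 1) ^ (i * (m + n - i)))⁻¹ *
      Real.exp (-((m * n : ℝ) + 1 / 2) * ((i * (m + n - i) : ℕ) : ℝ) * t) := by
  rcases Nat.eq_zero_or_pos (m + n) with hmn | hmn
  · obtain ⟨rfl, rfl⟩ : m = 0 ∧ n = 0 := by omega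
    simp
  · have : (1 : ℝ) ≤ m + n := by exact_mod_cast hmn
    have := Real.exp_nonneg (-((m * n : ℝ) + 1 / 2) * ((i * (m + n - i) : ℕ) : ℝ) * t)
    positivity

lemma alphaT_le_mul_alphaT {h h' : Matrix (Idx m n) (Idx m n) ℝ} (hh : h' * h = 1)
    (hh' : h * h' = 1) {L : ℝ} (hL1 : 1 ≤ L) (hL : ‖toEuclideanCLM (𝕜 := ℝ) h‖ ≤ L)
    (hL' : ‖toEuclideanCLM (𝕜 := ℝ) h'‖ ≤ L) (t : ℝ) (g : Matrix (Idx m n) (Idx m n) ℝ) :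
    alphaT m n t g ≤ L ^ (m + n) * alphaT m n t (h * g) := by
  rw [alphaT, alphaT, mul_sum]
  refine sum_le_sum fun i _ => ?_
  have hsqrt : √(alpha m n g i) ≤ L ^ (m + n) * √(alpha m n (h * g) i) :=
    calc √(alpha m n g i) ≤ √(L ^ (m + n) * alpha m n (h * g) i) :=
          Real.sqrt_le_sqrt (alpha_le_mul_alpha hh hh' hL1 hL hL' g i)
      _ = √(L ^ (m + n)) * √(alpha m n (h * g) i) := Real.sqrt_mul (by positivity) _
      _ ≤ L ^ (m + n) * √(alpha m n (h * g) i) := by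
        gcongr
        exact Real.sqrt_le_self_iff.2 (Or.inr (one_le_pow₀ hL1))
  calc _ ≤ _ * (L ^ (m + n) * √(alpha m n (h * g) i)) :=
        mul_le_mul_of_nonneg_left hsqrt (alphaT_coeff_nonneg m n i t)
    _ = _ := by ring

end Alpha

section Word

variable {m n : ℕ}

lemma toMat_zero : toMat (0 : Mspace m n) = 0 := rfl

lemma toMat_add (x y : Mspace m n) : toMat (x + y) = toMat x + toMat y := rfl

lemma toMat_smul (c : ℝ) (x : Mspace m n) : toMat (c • x) = c • toMat x := rfl

lemma gt_zero : gt m n 0 = 1 := by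
  simp [gt, ← diagonal_one]

lemma gt_mul_gt (u v : ℝ) : gt m n u * gt m n v = gt m n (u + v) := by
  simp only [gt, diagonal_mul_diagonal]
  congr 1
  ext (p | p) <;> simp [← Real.exp_add] <;> ring_nf

lemma hMat_zero : hMat (0 : Matrix (Fin m) (Fin n) ℝ) = 1 :=
  fromBlocks_one

lemma hMat_mul_hMat (a b : Matrix (Fin m) (Fin n) ℝ) : hMat a * hMat b = hMat (a + b) := by
  simp [hMat, fromBlocks_multiply, add_comm]

lemma hMat_toMat_neg_mul_hMat_toMat (x : Mspace m n) :
    hMat (toMat (-x)) * hMat (toMat x) = 1 := by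
  rw [hMat_mul_hMat, ← toMat_add, neg_add_cancel, toMat_zero, hMat_zero]

lemma hMat_mul_gt (u : ℝ) (a : Matrix (Fin m) (Fin n) ℝ) :
    hMat a * gt m n u = gt m n u * hMat (Real.exp (-((m + n : ℝ)) * u) • a) := by
  ext (i | i) (j | j) <;> simp [hMat, gt, mul_diagonal, diagonal_mul, mul_comm]
  rw [mul_left_comm, ← Real.exp_add]
  ring_nf

lemma sum_sq_hMat_toMat (x : Mspace m n) :
    ∑ p, ∑ q, hMat (toMat x) p q ^ 2 = m + n + ‖x‖ ^ 2 := by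
  simp [hMat, toMat, Fintype.sum_sum_type, EuclideanSpace.norm_sq_eq, Fintype.sum_prod_type,
    one_apply, sq_abs, sum_add_distrib]
  ring

lemma word_eq_gt_mul_hMat (t : ℝ) (s : ℕ → Mspace m n) (l : ℕ) :
    word m n t s l = gt m n (l * t) *
      hMat (toMat (∑ j ∈ Icc 1 l, Real.exp (-((m + n : ℝ)) * ((j : ℝ) - 1) * t) • s j)) := by
  induction l with
  | zero => simp [word, gt_zero, toMat_zero, hMat_zero]
  | succ l ih =>
    rw [word, ih, mul_assoc, ← mul_assoc (hMat _), hMat_mul_gt, ← mul_assoc, ← mul_assoc,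
      gt_mul_gt, mul_assoc, hMat_mul_hMat, sum_Icc_succ_top (by omega), toMat_add,
      toMat_smul, add_comm (toMat _)]
    push_cast
    ring_nf

lemma word_eq_hMat_mul_word {t : ℝ} {s s' : ℕ → Mspace m n} {l : ℕ}
    (hsum : ∑ j ∈ Icc 1 (l + 1), Real.exp (-((m + n : ℝ)) * ((j : ℝ) - 1) * t) • s j
      = ∑ j ∈ Icc 1 (l + 1), Real.exp (-((m + n : ℝ)) * ((j : ℝ) - 1) * t) • s' j) :
    word m n t s l = hMat (toMat (s' (l + 1) - s (l + 1))) * word m n t s' l := by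
  rw [word_eq_gt_mul_hMat, word_eq_gt_mul_hMat, ← mul_assoc, hMat_mul_gt, mul_assoc,
    hMat_mul_hMat, ← toMat_smul, ← toMat_add]
  rw [sum_Icc_succ_top (by omega), sum_Icc_succ_top (by omega)] at hsum
  push_cast at hsum
  congr 3
  rw [add_sub_cancel_right, mul_assoc] at hsum
  linear_combination (norm := module) hsum

end Word

theorem word_alphaT_comparison_general (m n : ℕ) :
    ∃ C : ℝ, 1 ≤ C ∧
      ∀ k : ℕ, 2 ≤ k → ∀ t : ℝ, 2 ≤ t →
      ∀ g : Matrix (Idx m n) (Idx m n) ℝ, g.det = 1 →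
      ∀ M : ℝ, 0 < M →
      ∀ s s' : ℕ → Mspace m n,
        (∀ j : ℕ, 1 ≤ j → j ≤ k → s j ∈ Metric.ball (0 : Mspace m n) 1) →
        (∀ j : ℕ, 1 ≤ j → j ≤ k → s' j ∈ Metric.ball (0 : Mspace m n) 1) →
        (∑ j ∈ Finset.Icc 1 k, Real.exp (-((m + n : ℝ)) * ((j : ℝ) - 1) * t) • s j
          = ∑ j ∈ Finset.Icc 1 k, Real.exp (-((m + n : ℝ)) * ((j : ℝ) - 1) * t) • s' j) →
        alphaT m n t (word m n t s' (k - 1) * g) > M →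
        alphaT m n t (word m n t s (k - 1) * g) > M / C := by
  set L : ℝ := √(m + n + 4)
  have hL1 : 1 ≤ L :=
    Real.one_le_sqrt.2 (by linarith [(m.cast_nonneg : (0 : ℝ) ≤ m), (n.cast_nonneg : (0 : ℝ) ≤ n)])
  have hL (y : Mspace m n) (hy : ‖y‖ ≤ 2) : ‖toEuclideanCLM (𝕜 := ℝ) (hMat (toMat y))‖ ≤ L :=
    (norm_toEuclideanCLM_le_sqrt_sum_sq _).trans <| Real.sqrt_le_sqrt <| by
      rw [sum_sq_hMat_toMat]
      nlinarith [norm_nonneg y]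
  refine ⟨L ^ (m + n), one_le_pow₀ hL1, ?_⟩
  intro k hk t _ g _ M _ s s' hs hs' hsum hM
  obtain ⟨l, rfl⟩ : ∃ l, k = l + 1 := ⟨k - 1, by omega⟩
  set x := s' (l + 1) - s (l + 1)
  have hx : ‖x‖ ≤ 2 := (norm_sub_le _ _).trans <| by
    linarith [mem_ball_zero_iff.1 (hs (l + 1) (by omega) le_rfl),
      mem_ball_zero_iff.1 (hs' (l + 1) (by omega) le_rfl)]
  have hcomp := alphaT_le_mul_alphaT (hMat_toMat_neg_mul_hMat_toMat x)
    (by simpa using hMat_toMat_neg_mul_hMat_toMat (-x)) hL1 (hL x hx)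
    (hL (-x) (by rwa [norm_neg])) t (word m n t s' l * g)
  rw [← mul_assoc, ← word_eq_hMat_mul_word hsum] at hcomp
  rw [Nat.add_sub_cancel] at hM ⊢
  rw [gt_iff_lt, div_lt_iff₀ (by positivity)]
  linarith

/-- **Lemma 4.2.**  There is `C ≥ 1`, depending only on `m` and `n`, such that for every
integer `k ≥ 2`, every real `t ≥ 2`, every unimodular lattice `x = g·ℤ^{m+n}`, every
`M > 0`, and all tuples `(s_1,…,s_k)`, `(s'_1,…,s'_k)` of elements of `B(1)` with
`Σ_{j=1}^k e^{−(m+n)(j−1)t}·s_j = Σ_{j=1}^k e^{−(m+n)(j−1)t}·s'_j`: if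
`α̃^t(g_t h_{s'_{k−1}} ⋯ g_t h_{s'_1} x) > M` then
`α̃^t(g_t h_{s_{k−1}} ⋯ g_t h_{s_1} x) > M/C`. -/
theorem word_alphaT_comparison (m n : ℕ) (hm : 0 < m) (hn : 0 < n) :
    ∃ C : ℝ, 1 ≤ C ∧
      ∀ k : ℕ, 2 ≤ k → ∀ t : ℝ, 2 ≤ t →
      ∀ g : Matrix (Idx m n) (Idx m n) ℝ, g.det = 1 →
      ∀ M : ℝ, 0 < M →
      ∀ s s' : ℕ → Mspace m n,
        (∀ j : ℕ, 1 ≤ j → j ≤ k → s j ∈ Metric.ball (0 : Mspace m n) 1) →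
        (∀ j : ℕ, 1 ≤ j → j ≤ k → s' j ∈ Metric.ball (0 : Mspace m n) 1) →
        (∑ j ∈ Finset.Icc 1 k, Real.exp (-((m + n : ℝ)) * ((j : ℝ) - 1) * t) • s j
          = ∑ j ∈ Finset.Icc 1 k, Real.exp (-((m + n : ℝ)) * ((j : ℝ) - 1) * t) • s' j) →
        alphaT m n t (word m n t s' (k - 1) * g) > M →
        alphaT m n t (word m n t s (k - 1) * g) > M / C :=
  word_alphaT_comparison_general m n

end DiagFlows
end
end

section
/- Let N be a positive integer, and for each subset J of {1,…,N} let d_J denote the number of indices i ∈ {1,…,N−1} such that i ∈ J and i+1 ∉ J. Then for all positive real numbers n₁, n₂, n₃: Σ_{J ⊆ {1,…,N}} n₁^{N−|J|−d_J} · n₂^{|J|−d_J} · n₃^{2·d_J} ≤ (n₁ + n₂ + n₃)^N. (Here the exponents N−|J|−d_J and |J|−d_J are nonnegative integers.) -/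
open scoped BigOperators

namespace DiagFlows

/-- For `J ⊆ {1,…,N}`, the number of indices `i ∈ {1,…,N−1}` with `i ∈ J` and `i+1 ∉ J`. -/
def dJ (N : ℕ) (J : Finset ℕ) : ℕ :=
  ((Finset.Icc 1 (N - 1)).filter fun i => i ∈ J ∧ i + 1 ∉ J).card

private def term (n₁ n₂ n₃ : ℝ) (N : ℕ) (J : Finset ℕ) : ℝ :=
  n₁ ^ (N - J.card - dJ N J) * n₂ ^ (J.card - dJ N J) * n₃ ^ (2 * dJ N J)

private lemma dJ_le_card (N : ℕ) (J : Finset ℕ) : dJ N J ≤ J.card := by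
  apply Finset.card_le_card
  intro i hi
  exact (Finset.mem_filter.mp hi).2.1

private lemma card_add_dJ_le (N : ℕ) (J : Finset ℕ) (hJ : J ⊆ Finset.Icc 1 N) :
    J.card + dJ N J ≤ N := by
  classical
  set D := (Finset.Icc 1 (N - 1)).filter (fun i => i ∈ J ∧ i + 1 ∉ J) with hD
  have hinj : Set.InjOn (· + 1) D := fun a _ b _ h => by simpa using h
  have hcard : (D.image (· + 1)).card = dJ N J := by
    rw [Finset.card_image_of_injOn hinj]; rfl
  have hdisj : Disjoint J (D.image (· + 1)) := by
    rw [Finset.disjoint_right]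
    intro x hx
    obtain ⟨i, hi, rfl⟩ := Finset.mem_image.mp hx
    exact (Finset.mem_filter.mp hi).2.2
  have hsub : J ∪ D.image (· + 1) ⊆ Finset.Icc 1 N := by
    intro x hx
    rcases Finset.mem_union.mp hx with h | h
    · exact hJ h
    · obtain ⟨i, hi, rfl⟩ := Finset.mem_image.mp h
      have := Finset.mem_Icc.mp (Finset.mem_filter.mp hi).1
      rw [Finset.mem_Icc]; omega
  have := Finset.card_le_card hsub
  rw [Finset.card_union_of_disjoint hdisj, hcard] at this
  simpa using this

private lemma dJ_insert_of_gt (M a : ℕ) (J : Finset ℕ) (h : M < a) :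
    dJ M (insert a J) = dJ M J := by
  unfold dJ
  congr 1
  apply Finset.filter_congr
  intro i hi
  rw [Finset.mem_Icc] at hi
  have h1 : i ≠ a := by omega
  have h2 : i + 1 ≠ a := by omega
  simp [Finset.mem_insert, h1, h2]

private lemma dJ_succ (N : ℕ) (K : Finset ℕ) (h0 : 0 ∉ K) :
    dJ (N + 1) K = dJ N K + (if N ∈ K ∧ N + 1 ∉ K then 1 else 0) := by
  classical
  rcases N with _ | n
  · simp only [dJ]
    have : (0 : ℕ) ∈ K ∧ (1 : ℕ) ∉ K ↔ False := by
      constructor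
      · intro h; exact h0 h.1
      · intro h; exact h.elim
    rw [if_neg (by tauto)]
    simp
  · unfold dJ
    have hIcc : Finset.Icc 1 (n + 2 - 1) = insert (n + 1) (Finset.Icc 1 (n + 1 - 1)) := by
      ext x
      simp only [Finset.mem_Icc, Finset.mem_insert]
      omega
    rw [hIcc, Finset.filter_insert]
    split_ifs with h
    · rw [Finset.card_insert_of_notMem]
      intro hmem
      have := Finset.mem_Icc.mp (Finset.mem_filter.mp hmem).1
      omega
    · simp

private lemma term_insert_top (n₁ n₂ n₃ : ℝ) (M : ℕ) (J : Finset ℕ)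
    (hJ : J ⊆ Finset.Icc 1 M) :
    term n₁ n₂ n₃ (M + 1) (insert (M + 1) J) = n₂ * term n₁ n₂ n₃ M J := by
  have hMJ : M + 1 ∉ J := fun h => by
    have := Finset.mem_Icc.mp (hJ h); omega
  have h0 : 0 ∉ insert (M + 1) J := by
    intro h
    rcases Finset.mem_insert.mp h with h | h
    · omega
    · have := Finset.mem_Icc.mp (hJ h); omega
  have hcard : (insert (M + 1) J).card = J.card + 1 := Finset.card_insert_of_notMem hMJ
  have hd : dJ (M + 1) (insert (M + 1) J) = dJ M J := by
    rw [dJ_succ M _ h0, if_neg (by simp), dJ_insert_of_gt M (M + 1) J (by omega)]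
    omega
  have hdc : dJ M J ≤ J.card := dJ_le_card M J
  unfold term
  rw [hd, hcard]
  have e1 : M + 1 - (J.card + 1) - dJ M J = M - J.card - dJ M J := by omega
  have e2 : J.card + 1 - dJ M J = (J.card - dJ M J) + 1 := by omega
  rw [e1, e2, pow_succ]
  ring

private lemma term_step_notmem (n₁ n₂ n₃ : ℝ) (M : ℕ) (J : Finset ℕ)
    (hJ : J ⊆ Finset.Icc 1 M) (hM : M ∉ J) :
    term n₁ n₂ n₃ (M + 1) J = n₁ * term n₁ n₂ n₃ M J := by
  have h0 : 0 ∉ J := fun h => by have := Finset.mem_Icc.mp (hJ h); omega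
  have hd : dJ (M + 1) J = dJ M J := by
    rw [dJ_succ M J h0, if_neg (by tauto)]
    omega
  have hle : J.card + dJ M J ≤ M := card_add_dJ_le M J hJ
  unfold term
  rw [hd]
  have e1 : M + 1 - J.card - dJ M J = (M - J.card - dJ M J) + 1 := by omega
  rw [e1, pow_succ]
  ring

private lemma term_step_insert (n₁ n₂ n₃ : ℝ) (L : ℕ) (J : Finset ℕ)
    (hJ : J ⊆ Finset.Icc 1 L) :
    n₂ * term n₁ n₂ n₃ (L + 2) (insert (L + 1) J) =
      n₃ ^ 2 * term n₁ n₂ n₃ (L + 1) (insert (L + 1) J) := by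
  set K := insert (L + 1) J with hK
  have hmem : ∀ x ∈ J, 1 ≤ x ∧ x ≤ L := fun x h => Finset.mem_Icc.mp (hJ h)
  have hLJ : L + 1 ∉ J := fun h => by have := hmem _ h; omega
  have h0 : 0 ∉ K := by
    intro h
    rcases Finset.mem_insert.mp h with h | h
    · omega
    · have := hmem _ h; omega
  have hL2K : L + 2 ∉ K := by
    intro h
    rcases Finset.mem_insert.mp h with h | h
    · omega
    · have := hmem _ h; omega
  have hd2 : dJ (L + 2) K = dJ (L + 1) K + 1 := by
    rw [dJ_succ (L + 1) K h0, if_pos ⟨Finset.mem_insert_self _ _, hL2K⟩]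
  have hd1 : dJ (L + 1) K = dJ L J := by
    rw [dJ_succ L K h0, if_neg (by simp [hK]), dJ_insert_of_gt L (L + 1) J (by omega)]
    omega
  have hcard : K.card = J.card + 1 := Finset.card_insert_of_notMem hLJ
  have hdc : dJ (L + 1) K + 1 ≤ K.card := by
    rw [hd1, hcard]
    have := dJ_le_card L J
    omega
  unfold term
  rw [hd2]
  set c := K.card
  set d := dJ (L + 1) K
  have e1 : L + 2 - c - (d + 1) = L + 1 - c - d := by omega
  have e2 : c - d = (c - (d + 1)) + 1 := by omega
  have e3 : 2 * (d + 1) = 2 * d + 2 := by ring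
  rw [e1, e2, e3, pow_succ, pow_add]
  ring

private lemma key (n₁ n₂ n₃ : ℝ) (h₁ : 0 < n₁) (h₂ : 0 < n₂) (h₃ : 0 < n₃) (m : ℕ) :
    (∑ J ∈ (Finset.Icc 1 m).powerset, term n₁ n₂ n₃ (m + 1) (insert (m + 1) J))
        ≤ n₂ * (n₁ + n₂ + n₃) ^ m ∧
    (∑ J ∈ (Finset.Icc 1 m).powerset, term n₁ n₂ n₃ (m + 1) J)
        ≤ (n₁ + n₃) * (n₁ + n₂ + n₃) ^ m := by
  classical
  induction m with
  | zero =>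
      have hIcc : Finset.Icc 1 0 = (∅ : Finset ℕ) := by decide
      rw [hIcc]
      constructor
      · simp only [Finset.powerset_empty, Finset.sum_singleton]
        unfold term dJ
        norm_num
      · simp only [Finset.powerset_empty, Finset.sum_singleton]
        unfold term dJ
        norm_num
        linarith
  | succ m ih =>
      obtain ⟨ihA, ihB⟩ := ih
      have hnot : m + 1 ∉ Finset.Icc 1 m := by
        rw [Finset.mem_Icc]; omega
      have hIcc : Finset.Icc 1 (m + 1) = insert (m + 1) (Finset.Icc 1 m) := by
        ext x
        simp only [Finset.mem_Icc, Finset.mem_insert]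
        omega
      have hs : (0 : ℝ) < n₁ + n₂ + n₃ := by linarith
      have hspow : (0 : ℝ) ≤ (n₁ + n₂ + n₃) ^ m := le_of_lt (pow_pos hs m)
      -- the total sum at level m+1
      have hT : (∑ J ∈ (Finset.Icc 1 (m + 1)).powerset, term n₁ n₂ n₃ (m + 1) J)
          ≤ (n₁ + n₂ + n₃) ^ (m + 1) := by
        rw [hIcc, Finset.sum_powerset_insert hnot]
        have : ∀ J ∈ (Finset.Icc 1 m).powerset,
            term n₁ n₂ n₃ (m + 1) (insert (m + 1) J) =
              term n₁ n₂ n₃ (m + 1) (insert (m + 1) J) := fun _ _ => rfl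
        rw [pow_succ]
        nlinarith [ihA, ihB]
      constructor
      · -- A part
        show (∑ J ∈ (Finset.Icc 1 (m + 1)).powerset,
            term n₁ n₂ n₃ (m + 2) (insert (m + 2) J)) ≤ n₂ * (n₁ + n₂ + n₃) ^ (m + 1)
        have hrw : (∑ J ∈ (Finset.Icc 1 (m + 1)).powerset,
              term n₁ n₂ n₃ (m + 2) (insert (m + 2) J))
            = n₂ * ∑ J ∈ (Finset.Icc 1 (m + 1)).powerset, term n₁ n₂ n₃ (m + 1) J := by
          rw [Finset.mul_sum]
          apply Finset.sum_congr rfl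
          intro J hJ
          exact term_insert_top n₁ n₂ n₃ (m + 1) J (Finset.mem_powerset.mp hJ)
        rw [hrw]
        exact mul_le_mul_of_nonneg_left hT (le_of_lt h₂)
      · -- B part
        show (∑ J ∈ (Finset.Icc 1 (m + 1)).powerset, term n₁ n₂ n₃ (m + 2) J)
            ≤ (n₁ + n₃) * (n₁ + n₂ + n₃) ^ (m + 1)
        have hsplit : (∑ J ∈ (Finset.Icc 1 (m + 1)).powerset, term n₁ n₂ n₃ (m + 2) J)
            = (∑ J ∈ (Finset.Icc 1 m).powerset, term n₁ n₂ n₃ (m + 2) J)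
              + ∑ J ∈ (Finset.Icc 1 m).powerset, term n₁ n₂ n₃ (m + 2) (insert (m + 1) J) := by
          rw [hIcc, Finset.sum_powerset_insert hnot]
        have hfst : (∑ J ∈ (Finset.Icc 1 m).powerset, term n₁ n₂ n₃ (m + 2) J)
            = n₁ * ∑ J ∈ (Finset.Icc 1 m).powerset, term n₁ n₂ n₃ (m + 1) J := by
          rw [Finset.mul_sum]
          apply Finset.sum_congr rfl
          intro J hJ
          have hJ' : J ⊆ Finset.Icc 1 m := Finset.mem_powerset.mp hJ
          apply term_step_notmem
          · intro x hx
            have := Finset.mem_Icc.mp (hJ' hx)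
            rw [Finset.mem_Icc]; omega
          · intro h
            have := Finset.mem_Icc.mp (hJ' h); omega
        have hsnd : n₂ * (∑ J ∈ (Finset.Icc 1 m).powerset,
              term n₁ n₂ n₃ (m + 2) (insert (m + 1) J))
            = n₃ ^ 2 * ∑ J ∈ (Finset.Icc 1 m).powerset,
                term n₁ n₂ n₃ (m + 1) (insert (m + 1) J) := by
          rw [Finset.mul_sum, Finset.mul_sum]
          apply Finset.sum_congr rfl
          intro J hJ
          exact term_step_insert n₁ n₂ n₃ m J (Finset.mem_powerset.mp hJ)
        rw [hsplit, hfst]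
        set SA := ∑ J ∈ (Finset.Icc 1 m).powerset, term n₁ n₂ n₃ (m + 1) (insert (m + 1) J)
        set SB := ∑ J ∈ (Finset.Icc 1 m).powerset, term n₁ n₂ n₃ (m + 1) J
        set S2 := ∑ J ∈ (Finset.Icc 1 m).powerset, term n₁ n₂ n₃ (m + 2) (insert (m + 1) J)
        have hmul : n₂ * (n₁ * SB + S2) ≤ n₂ * ((n₁ + n₃) * (n₁ + n₂ + n₃) ^ (m + 1)) := by
          have expand : n₂ * (n₁ * SB + S2) = n₁ * n₂ * SB + n₃ ^ 2 * SA := by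
            rw [mul_add, hsnd]; ring
          rw [expand]
          have hp : (n₁ + n₂ + n₃) ^ (m + 1) = (n₁ + n₂ + n₃) ^ m * (n₁ + n₂ + n₃) :=
            pow_succ _ _
          rw [hp]
          have b1 : n₁ * n₂ * SB ≤ n₁ * n₂ * ((n₁ + n₃) * (n₁ + n₂ + n₃) ^ m) :=
            mul_le_mul_of_nonneg_left ihB (mul_pos h₁ h₂).le
          have b2 : n₃ ^ 2 * SA ≤ n₃ ^ 2 * (n₂ * (n₁ + n₂ + n₃) ^ m) :=
            mul_le_mul_of_nonneg_left ihA (sq_nonneg n₃)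
          nlinarith [b1, b2, hspow, mul_pos h₁ h₂, mul_pos h₂ h₃, mul_pos h₁ h₃,
            mul_pos (mul_pos h₁ h₂) h₃,
            mul_nonneg (mul_nonneg h₁.le h₂.le) hspow,
            mul_nonneg (mul_nonneg h₁.le h₃.le) hspow,
            mul_nonneg (mul_nonneg h₂.le h₃.le) hspow,
            mul_nonneg (mul_nonneg (mul_nonneg h₁.le h₂.le) h₃.le) hspow]
        exact le_of_mul_le_mul_left hmul h₂

/-- **The multinomial counting lemma (Lemma 5.3).**  For every positive integer `N` and all
positive reals `n₁, n₂, n₃`,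
`Σ_{J ⊆ {1,…,N}} n₁^{N−|J|−d_J}·n₂^{|J|−d_J}·n₃^{2d_J} ≤ (n₁+n₂+n₃)^N`. -/
theorem sum_powerset_le (N : ℕ) (hN : 0 < N) (n₁ n₂ n₃ : ℝ)
    (h₁ : 0 < n₁) (h₂ : 0 < n₂) (h₃ : 0 < n₃) :
    ∑ J ∈ (Finset.Icc 1 N).powerset,
        n₁ ^ (N - J.card - dJ N J) * n₂ ^ (J.card - dJ N J) * n₃ ^ (2 * dJ N J)
      ≤ (n₁ + n₂ + n₃) ^ N := by
  classical
  obtain ⟨m, rfl⟩ : ∃ m, N = m + 1 := ⟨N - 1, by omega⟩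
  obtain ⟨ihA, ihB⟩ := key n₁ n₂ n₃ h₁ h₂ h₃ m
  have hnot : m + 1 ∉ Finset.Icc 1 m := by rw [Finset.mem_Icc]; omega
  have hIcc : Finset.Icc 1 (m + 1) = insert (m + 1) (Finset.Icc 1 m) := by
    ext x
    simp only [Finset.mem_Icc, Finset.mem_insert]
    omega
  show (∑ J ∈ (Finset.Icc 1 (m + 1)).powerset, term n₁ n₂ n₃ (m + 1) J)
    ≤ (n₁ + n₂ + n₃) ^ (m + 1)
  rw [hIcc, Finset.sum_powerset_insert hnot, pow_succ]
  nlinarith [ihA, ihB]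

end DiagFlows
end

section
/- Let m, n be positive integers, let c be a real number with 0 < c < 1, and let s ∈ M_{m,n}(ℝ). Then s ∈ DI_{m,n}(c) if and only if there exists T ≥ 0 such that for every real t ≥ T the lattice g_t·h_s·ℤ^{m+n} contains a nonzero vector v = (v⁽¹⁾, v⁽²⁾) ∈ ℝ^m × ℝ^n with ‖v⁽¹⁾‖_∞ < c and ‖v⁽²⁾‖_∞ ≤ 1. -/
/-!
Put `N = e^{mt}`. The lattice vector `g_t h_s (-p, q)` is `(e^{nt} (sq - p), e^{-mt} q)`, so it
lies in the box `‖v⁽¹⁾‖ < c, ‖v⁽²⁾‖ ≤ 1` exactly when `(p, q)` solves the Dirichlet problem at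
`N`, and `N^{-n/m} = e^{-nt}`. Such a vector is nonzero exactly when `q ≠ 0`: for `q = 0` it is
`(-e^{nt} p, 0)`, whose first block has norm `≥ 1 > c` when `t ≥ 0` and `p ≠ 0`.
-/

open scoped BigOperators

noncomputable section

namespace DiagFlows

/-- The set `DI_{m,n}(c)` of `c`-Dirichlet-improvable `m × n` matrices: those `s` for which
there is `N₀ > 0` such that for all real `N ≥ N₀` there are `p ∈ ℤ^m`, `q ∈ ℤ^n` with
`0 < ‖q‖_∞ ≤ N` and `‖sq - p‖_∞ < c·N^{-n/m}`.  (The norms on `Fin m → ℝ` and `Fin n → ℝ`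
are the sup norms.) -/
def DIset (m n : ℕ) (c : ℝ) : Set (Mspace m n) :=
  {s | ∃ N₀ : ℝ, 0 < N₀ ∧ ∀ N : ℝ, N₀ ≤ N →
    ∃ (p : Fin m → ℤ) (q : Fin n → ℤ),
      0 < ‖(fun j => (q j : ℝ) : Fin n → ℝ)‖ ∧
      ‖(fun j => (q j : ℝ) : Fin n → ℝ)‖ ≤ N ∧
      ‖(toMat s).mulVec (fun j => (q j : ℝ)) - (fun i => (p i : ℝ))‖ < c * N ^ (-(n : ℝ) / m)}

open Filter
open scoped Matrix

lemma eventually_atTop_iff_exists_gt {α : Type*} [LinearOrder α] [NoMaxOrder α] (b : α)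
    {p : α → Prop} : (∀ᶠ x in atTop, p x) ↔ ∃ a, b < a ∧ ∀ x, a ≤ x → p x := by
  have : Nonempty α := ⟨b⟩
  refine ⟨fun h => ?_, fun ⟨a, _, ha⟩ => eventually_atTop.2 ⟨a, ha⟩⟩
  obtain ⟨a, ha⟩ := eventually_atTop.1 h
  obtain ⟨b', hb'⟩ := exists_gt b
  exact ⟨max a b', lt_max_of_lt_right hb', fun x hx => ha x (le_of_max_le_left hx)⟩

lemma map_exp_mul_atTop {a : ℝ} (ha : 0 < a) :
    map (fun t => Real.exp (a * t)) atTop = atTop := by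
  have h := congrArg (map Real.exp) (OrderIso.mulLeft₀ a ha).map_atTop
  rwa [map_map, Real.map_exp_atTop] at h

lemma one_le_norm_intCast {ι : Type*} [Fintype ι] {z : ι → ℤ} (hz : z ≠ 0) :
    1 ≤ ‖(fun i => (z i : ℝ) : ι → ℝ)‖ := by
  obtain ⟨i, hi⟩ := Function.ne_iff.mp hz
  calc (1 : ℝ) ≤ |(z i : ℝ)| := by exact_mod_cast Int.one_le_abs hi
    _ ≤ _ := norm_le_pi_norm (fun i => (z i : ℝ)) i

section Lattice

variable {m n : ℕ}

lemma gt_mul_hMat_mulVec (t : ℝ) (M : Matrix (Fin m) (Fin n) ℝ) (a : Fin m → ℝ)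
    (b : Fin n → ℝ) :
    (gt m n t * hMat M) *ᵥ Sum.elim a b =
      Sum.elim (Real.exp (n * t) • (a + M *ᵥ b)) (Real.exp (-(m * t)) • b) := by
  ext (i | j) <;>
    simp [gt, hMat, ← Matrix.mulVec_mulVec, Matrix.mulVec_diagonal, Matrix.fromBlocks_mulVec,
      mul_add]

lemma lattice_vector_ne_zero_iff {t : ℝ} (ht : 0 ≤ t) (M : Matrix (Fin m) (Fin n) ℝ)
    (p : Fin m → ℤ) (q : Fin n → ℤ)
    (hx : ‖Real.exp (n * t) • (M *ᵥ (fun j => (q j : ℝ)) - fun i => (p i : ℝ))‖ < 1) :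
    Sum.elim (Real.exp (n * t) • (M *ᵥ (fun j => (q j : ℝ)) - fun i => (p i : ℝ)))
        (Real.exp (-(m * t)) • fun j => (q j : ℝ)) ≠ 0 ↔
      (fun j => (q j : ℝ) : Fin n → ℝ) ≠ 0 := by
  constructor
  · intro hv hq
    have hp : p ≠ 0 := by
      rintro rfl
      apply hv
      ext (i | j) <;> simp [hq]
    rw [hq, Matrix.mulVec_zero, zero_sub, norm_smul, norm_neg,
      Real.norm_of_nonneg (Real.exp_pos _).le] at hx
    nlinarith [one_le_norm_intCast hp, Real.one_le_exp (by positivity : 0 ≤ (n : ℝ) * t)]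
  · intro hq hv
    refine hq ((smul_eq_zero.mp (funext fun j => congrFun hv (Sum.inr j))).resolve_left ?_)
    exact Real.exp_ne_zero _

theorem exists_lattice_vector_iff {c t : ℝ} (hc : c ≤ 1) (ht : 0 ≤ t)
    (M : Matrix (Fin m) (Fin n) ℝ) :
    (∃ v : Idx m n → ℝ,
      (∃ w : Idx m n → ℤ, v = (gt m n t * hMat M).mulVec fun j => (w j : ℝ)) ∧
      v ≠ 0 ∧
      ‖(fun i => v (Sum.inl i) : Fin m → ℝ)‖ < c ∧
      ‖(fun i => v (Sum.inr i) : Fin n → ℝ)‖ ≤ 1) ↔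
    ∃ (p : Fin m → ℤ) (q : Fin n → ℤ),
      0 < ‖(fun j => (q j : ℝ) : Fin n → ℝ)‖ ∧
      ‖(fun j => (q j : ℝ) : Fin n → ℝ)‖ ≤ Real.exp (m * t) ∧
      ‖M *ᵥ (fun j => (q j : ℝ)) - (fun i => (p i : ℝ))‖ < c * Real.exp (-(n * t)) := by
  have hv (p : Fin m → ℤ) (q : Fin n → ℤ) :
      (gt m n t * hMat M) *ᵥ (fun x => ((Sum.elim (-p) q x : ℤ) : ℝ)) =
        Sum.elim (Real.exp (n * t) • (M *ᵥ (fun j => (q j : ℝ)) - fun i => (p i : ℝ)))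
          (Real.exp (-(m * t)) • fun j => (q j : ℝ)) := by
    rw [← neg_add_eq_sub, ← gt_mul_hMat_mulVec]
    congr 1
    ext (i | j) <;> simp
  have hexp (x : ℝ) : ‖Real.exp x‖ = Real.exp x := Real.norm_of_nonneg (Real.exp_pos x).le
  have hbox (p : Fin m → ℤ) (q : Fin n → ℤ) :
      ‖Real.exp (n * t) • (M *ᵥ (fun j => (q j : ℝ)) - fun i => (p i : ℝ))‖ < c ↔
        ‖M *ᵥ (fun j => (q j : ℝ)) - (fun i => (p i : ℝ))‖ < c * Real.exp (-(n * t)) := by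
    rw [norm_smul, hexp, Real.exp_neg, ← div_eq_mul_inv, lt_div_iff₀ (Real.exp_pos _), mul_comm]
  have hheight (q : Fin n → ℤ) :
      ‖Real.exp (-(m * t)) • (fun j => (q j : ℝ))‖ ≤ 1 ↔
        ‖(fun j => (q j : ℝ) : Fin n → ℝ)‖ ≤ Real.exp (m * t) := by
    rw [norm_smul, hexp, Real.exp_neg, inv_mul_le_iff₀ (Real.exp_pos _), mul_one]
  constructor
  · rintro ⟨_, ⟨w, rfl⟩, hne, h₁, h₂⟩
    obtain ⟨p, q, rfl⟩ : ∃ p q, w = Sum.elim (-p) q :=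
      ⟨fun i => -w (Sum.inl i), fun j => w (Sum.inr j), by ext (i | j) <;> simp⟩
    simp only [hv, Sum.elim_inl, Sum.elim_inr] at hne h₁ h₂
    refine ⟨p, q, norm_pos_iff.2 ?_, (hheight q).1 h₂, (hbox p q).1 h₁⟩
    exact (lattice_vector_ne_zero_iff ht M p q (h₁.trans_le hc)).1 hne
  · rintro ⟨p, q, hq, hqN, hpq⟩
    have h₁ := (hbox p q).2 hpq
    refine ⟨_, ⟨Sum.elim (-p) q, rfl⟩, ?_⟩
    simp only [hv, Sum.elim_inl, Sum.elim_inr]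
    exact ⟨(lattice_vector_ne_zero_iff ht M p q (h₁.trans_le hc)).2 (norm_pos_iff.1 hq),
      h₁, (hheight q).2 hqN⟩

end Lattice

theorem mem_DIset_iff_general (m n : ℕ) (hm : 0 < m)
    (c : ℝ) (hc1 : c < 1) (s : Mspace m n) :
    s ∈ DIset m n c ↔
      ∃ T : ℝ, 0 ≤ T ∧ ∀ t : ℝ, T ≤ t →
        ∃ v : Idx m n → ℝ,
          (∃ w : Idx m n → ℤ, v = (gt m n t * hMat (toMat s)).mulVec fun j => (w j : ℝ)) ∧
          v ≠ 0 ∧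
          ‖(fun i => v (Sum.inl i) : Fin m → ℝ)‖ < c ∧
          ‖(fun i => v (Sum.inr i) : Fin n → ℝ)‖ ≤ 1 := by
  have hm₀ : (0 : ℝ) < m := Nat.cast_pos.2 hm
  have hrpow (t : ℝ) : Real.exp (m * t) ^ (-(n : ℝ) / m) = Real.exp (-(n * t)) := by
    rw [← Real.exp_mul]
    congr 1
    field_simp
  refine (eventually_atTop_iff_exists_gt 0).symm.trans
    (Iff.trans ?_ (atTop_basis' 0).eventually_iff)
  conv_lhs => rw [← map_exp_mul_atTop hm₀, eventually_map]
  refine eventually_congr ((eventually_ge_atTop 0).mono fun t ht => ?_)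
  rw [hrpow]
  exact (exists_lattice_vector_iff hc1.le ht _).symm

/-- **The Dani correspondence for Dirichlet improvability.**  For positive integers `m, n`,
`0 < c < 1` and `s ∈ M_{m,n}(ℝ)`: `s ∈ DI_{m,n}(c)` if and only if there is `T ≥ 0` such
that for every real `t ≥ T` the lattice `g_t·h_s·ℤ^{m+n}` contains a nonzero vector
`v = (v⁽¹⁾, v⁽²⁾) ∈ ℝ^m × ℝ^n` with `‖v⁽¹⁾‖_∞ < c` and `‖v⁽²⁾‖_∞ ≤ 1`. -/
theorem mem_DIset_iff (m n : ℕ) (hm : 0 < m) (hn : 0 < n)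
    (c : ℝ) (hc0 : 0 < c) (hc1 : c < 1) (s : Mspace m n) :
    s ∈ DIset m n c ↔
      ∃ T : ℝ, 0 ≤ T ∧ ∀ t : ℝ, T ≤ t →
        ∃ v : Idx m n → ℝ,
          (∃ w : Idx m n → ℤ, v = (gt m n t * hMat (toMat s)).mulVec fun j => (w j : ℝ)) ∧
          v ≠ 0 ∧
          ‖(fun i => v (Sum.inl i) : Fin m → ℝ)‖ < c ∧
          ‖(fun i => v (Sum.inr i) : Fin n → ℝ)‖ ≤ 1 :=
  mem_DIset_iff_general m n hm c hc1 s

end DiagFlows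
end
end
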